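/- arXiv:2603.13690 — 7 statements merged into one kernel-verified Lean document; each statement's English description precedes it below -/
import Mathlib

section
/- Let p ∈ (0,1]. For every T > 0 there exist a constant C_T > 0 and an integer N such that for all n ≥ N, sup_{t∈[0,T]} |a_{n+⌊nt⌋}/a_n − (1+t)^{1−2p}| ≤ C_T/n. -/
/-!
With `q = 2p - 1 ∈ (-1, 1]`, the functional equation `Γ(x + 1) = x Γ(x)` turns `a_{n+m} / a_n`
into the finite product `∏_{k<m} (n + k) / (n + k + q)`. Its logarithm `-∑ log (1 + q / (n + k))`
differs from `-q ∑ log (1 + 1 / (n + k)) = -q log (1 + m / n)` by `O(∑ (n + k)⁻²) = O(m / n²)`,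
since `log (1 + q v) - q log (1 + v) = O(v²)` uniformly in `|q| ≤ 1`. For `m = ⌊n t⌋` this gives
`log (a_{n+m} / a_n) = -q log (1 + t) + O(1 / n)`, and exponentiating costs a factor bounded by
`(1 + t)^{-q} ≤ 1 + T`.
-/

open Real Finset

/-- `a p n = Γ(2p)·Γ(n)/Γ(n+2p−1)`. -/
noncomputable def a (p : ℝ) (n : ℕ) : ℝ :=
  Real.Gamma (2*p) * Real.Gamma n / Real.Gamma ((n:ℝ) + 2*p - 1)

theorem Real.Gamma_add_nat_eq_mul_prod {x : ℝ} (hx : 0 < x) (m : ℕ) :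
    Gamma (x + m) = Gamma x * ∏ k ∈ range m, (x + k) := by
  induction m with
  | zero => simp
  | succ m ih =>
    rw [Nat.cast_succ, ← add_assoc, Gamma_add_one (by positivity), ih, prod_range_succ]
    ring

theorem Real.abs_log_one_add_sub_self_le {x : ℝ} (hx : |x| ≤ 1 / 2) :
    |log (1 + x) - x| ≤ 2 * x ^ 2 := by
  have h := abs_log_sub_add_sum_range_le (x := -x) (by rw [abs_neg]; linarith) 1
  simp only [sum_range_one, pow_one, Nat.cast_zero, zero_add, div_one, sub_neg_eq_add,
    abs_neg] at h
  calc |log (1 + x) - x| = |-x + log (1 + x)| := by ring_nf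
    _ ≤ |x| ^ 2 / (1 - |x|) := h
    _ ≤ 2 * x ^ 2 := by
      rw [sq_abs, div_le_iff₀ (by linarith)]
      nlinarith [abs_nonneg x, sq_nonneg x]

theorem Real.abs_log_one_add_mul_sub_mul_log_one_add_le {q v : ℝ} (hq : |q| ≤ 1)
    (hv : |v| ≤ 1 / 2) : |log (1 + q * v) - q * log (1 + v)| ≤ 4 * v ^ 2 := by
  have hqv : |q * v| ≤ |v| := by rw [abs_mul]; exact mul_le_of_le_one_left (abs_nonneg v) hq
  have hsq : (q * v) ^ 2 ≤ v ^ 2 := sq_le_sq.2 hqv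
  have h₁ := abs_log_one_add_sub_self_le (hqv.trans hv)
  have h₂ : |q * (log (1 + v) - v)| ≤ 2 * v ^ 2 := by
    rw [abs_mul]
    exact (mul_le_mul hq (abs_log_one_add_sub_self_le hv) (abs_nonneg _) zero_le_one).trans_eq
      (one_mul _)
  calc |log (1 + q * v) - q * log (1 + v)|
      = |(log (1 + q * v) - q * v) - q * (log (1 + v) - v)| := by ring_nf
    _ ≤ |log (1 + q * v) - q * v| + |q * (log (1 + v) - v)| := abs_sub _ _
    _ ≤ 4 * v ^ 2 := by linarith

theorem Real.sum_range_log_one_add_inv {x : ℝ} (hx : 0 < x) (m : ℕ) :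
    ∑ k ∈ range m, log (1 + 1 / (x + k)) = log (1 + m / x) := by
  have hterm : ∀ k : ℕ, log (1 + 1 / (x + k)) = log (x + (k + 1 : ℕ)) - log (x + k) := by
    intro k
    have hxk : 0 < x + k := by positivity
    rw [← log_div (by positivity) hxk.ne']
    congr 1
    field_simp
    push_cast
    ring
  rw [sum_congr rfl fun k _ => hterm k, sum_range_sub (fun k : ℕ => log (x + k)),
    Nat.cast_zero, add_zero, ← log_div (by positivity) hx.ne']
  congr 1
  field_simp

theorem Real.abs_log_prod_div_add_add_mul_log_le {x q : ℝ} (hx : 2 ≤ x) (hq : |q| ≤ 1)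
    (m : ℕ) : |log (∏ k ∈ range m, (x + k) / (x + k + q)) + q * log (1 + m / x)|
      ≤ 4 * m / x ^ 2 := by
  have hq' : -1 ≤ q := (abs_le.1 hq).1
  have hxk : ∀ k : ℕ, x ≤ x + k := fun k => le_add_of_nonneg_right k.cast_nonneg
  have hfactor : ∀ k : ℕ, (x + k) / (x + k + q) = (1 + q * (1 / (x + k)))⁻¹ := by
    intro k
    have : 0 < x + k := by linarith [hxk k]
    field_simp
  have hterm : ∀ k ∈ range m, |log (1 + q * (1 / (x + k))) - q * log (1 + 1 / (x + k))|
      ≤ 4 / x ^ 2 := by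
    intro k _
    have hv : |1 / (x + k)| ≤ 1 / 2 := by
      rw [abs_of_pos (one_div_pos.2 (by linarith [hxk k]))]
      exact one_div_le_one_div_of_le two_pos (hx.trans (hxk k))
    calc _ ≤ 4 * (1 / (x + k)) ^ 2 := abs_log_one_add_mul_sub_mul_log_one_add_le hq hv
      _ ≤ 4 / x ^ 2 := by
        rw [div_pow, one_pow, mul_one_div]
        gcongr
        exact hxk k
  rw [← sum_range_log_one_add_inv (by linarith), mul_sum,
    log_prod fun k _ => div_ne_zero (by linarith [hxk k]) (by linarith [hxk k])]
  calc |∑ k ∈ range m, log ((x + k) / (x + k + q)) + ∑ k ∈ range m, q * log (1 + 1 / (x + k))|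
      = |∑ k ∈ range m, (log (1 + q * (1 / (x + k))) - q * log (1 + 1 / (x + k)))| := by
        rw [← abs_neg, ← sum_add_distrib, ← sum_neg_distrib]
        simp only [hfactor, log_inv]
        ring_nf
    _ ≤ ∑ k ∈ range m, 4 / x ^ 2 := abs_sum_le_sum_abs _ _ |>.trans (sum_le_sum hterm)
    _ = 4 * m / x ^ 2 := by rw [sum_const, card_range, nsmul_eq_mul]; ring

theorem Real.log_one_add_sub_log_one_add_le {u t : ℝ} (hu : 0 ≤ u) (hut : u ≤ t) :
    log (1 + t) - log (1 + u) ≤ t - u := by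
  rw [← log_div (by linarith) (by linarith)]
  calc log ((1 + t) / (1 + u)) ≤ (1 + t) / (1 + u) - 1 :=
        log_le_sub_one_of_pos (div_pos (by linarith) (by linarith))
    _ = (t - u) / (1 + u) := by field_simp; ring
    _ ≤ t - u := div_le_self (by linarith) (by linarith)

theorem abs_log_one_add_floor_mul_div_sub_le {n : ℕ} (hn : 0 < n) {t : ℝ} (ht : 0 ≤ t) :
    |log (1 + ⌊n * t⌋₊ / n) - log (1 + t)| ≤ 1 / n := by
  have hn' : (0 : ℝ) < n := Nat.cast_pos.2 hn
  have hle : ⌊n * t⌋₊ / (n : ℝ) ≤ t := by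
    rw [div_le_iff₀ hn', mul_comm]; exact Nat.floor_le (by positivity)
  have hlt : t - 1 / n ≤ ⌊n * t⌋₊ / (n : ℝ) := by
    rw [sub_le_iff_le_add, ← add_div, le_div_iff₀ hn', mul_comm]
    exact (Nat.lt_floor_add_one _).le
  rw [abs_sub_comm, abs_of_nonneg (sub_nonneg.2 (log_le_log (by positivity) (by linarith)))]
  linarith [log_one_add_sub_log_one_add_le (by positivity) hle]

theorem Real.abs_exp_sub_exp_le {x y : ℝ} (h : |y - x| ≤ 1) :
    |exp y - exp x| ≤ 2 * exp x * |y - x| := by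
  calc |exp y - exp x| = exp x * |exp (y - x) - 1| := by
        rw [← abs_of_pos (exp_pos x), ← abs_mul, abs_of_pos (exp_pos x), mul_sub,
          ← exp_add]
        ring_nf
    _ ≤ exp x * (2 * |y - x|) := by gcongr; exact abs_exp_sub_one_le h
    _ = 2 * exp x * |y - x| := by ring

theorem a_pos {p : ℝ} (hp : 0 < p) {n : ℕ} (hn : 1 ≤ n) : 0 < a p n := by
  have hn' : (1 : ℝ) ≤ n := Nat.one_le_cast.2 hn
  unfold a
  have := Gamma_pos_of_pos (by linarith : (0 : ℝ) < n + 2 * p - 1)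
  have := Gamma_pos_of_pos (by linarith : (0 : ℝ) < n)
  have := Gamma_pos_of_pos (by linarith : (0 : ℝ) < 2 * p)
  positivity

theorem a_add_div_a {p : ℝ} (hp : 0 < p) {n : ℕ} (hn : 1 ≤ n) (m : ℕ) :
    a p (n + m) / a p n = ∏ k ∈ range m, (n + k : ℝ) / (n + k + (2 * p - 1)) := by
  have hn' : (1 : ℝ) ≤ n := Nat.one_le_cast.2 hn
  have hx : (0 : ℝ) < n + (2 * p - 1) := by linarith
  have hΓ := Gamma_add_nat_eq_mul_prod hx m
  have hΓ' := Gamma_add_nat_eq_mul_prod (by linarith : (0 : ℝ) < n) m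
  have h₁ := (Gamma_pos_of_pos hx).ne'
  have h₂ := (Gamma_pos_of_pos (by linarith : (0 : ℝ) < n)).ne'
  have h₃ := (Gamma_pos_of_pos (by linarith : (0 : ℝ) < 2 * p)).ne'
  have h₄ : ∏ k ∈ range m, ((n : ℝ) + (2 * p - 1) + k) ≠ 0 :=
    prod_ne_zero_iff.2 fun k _ => by positivity
  unfold a
  rw [prod_div_distrib, Nat.cast_add, hΓ',
    show (n : ℝ) + m + 2 * p - 1 = n + (2 * p - 1) + m by ring, hΓ,
    show (n : ℝ) + 2 * p - 1 = n + (2 * p - 1) by ring]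
  simp_rw [add_right_comm _ (2 * p - 1)]
  field_simp

theorem abs_log_a_add_floor_div_a_add_le {p : ℝ} (hp : p ∈ Set.Ioc (0 : ℝ) 1) {n : ℕ}
    (hn : 2 ≤ n) {t : ℝ} (ht : 0 ≤ t) :
    |log (a p (n + ⌊(n : ℝ) * t⌋₊) / a p n) + (2 * p - 1) * log (1 + t)| ≤ (4 * t + 1) / n := by
  obtain ⟨hp0, hp1⟩ := hp
  have hq : |2 * p - 1| ≤ 1 := abs_le.2 ⟨by linarith, by linarith⟩
  have hn2 : (2 : ℝ) ≤ n := by exact_mod_cast hn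
  have hm : (⌊(n : ℝ) * t⌋₊ : ℝ) ≤ n * t := Nat.floor_le (by positivity)
  rw [a_add_div_a hp0 (by omega)]
  set m := ⌊(n : ℝ) * t⌋₊
  set L := log (∏ k ∈ range m, (n + k : ℝ) / (n + k + (2 * p - 1)))
  calc |L + (2 * p - 1) * log (1 + t)|
      = |(L + (2 * p - 1) * log (1 + m / n)) +
          (2 * p - 1) * (log (1 + t) - log (1 + m / n))| := by congr 1; ring
    _ ≤ 4 * m / n ^ 2 + 1 / n := by
      refine (abs_add_le _ _).trans (add_le_add (abs_log_prod_div_add_add_mul_log_le hn2 hq m) ?_)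
      rw [abs_mul, abs_sub_comm (log (1 + t))]
      exact mul_le_mul hq (abs_log_one_add_floor_mul_div_sub_le (by omega : 0 < n) ht)
        (abs_nonneg _) zero_le_one |>.trans_eq (one_mul _)
    _ ≤ 4 * (n * t) / n ^ 2 + 1 / n := by gcongr
    _ = (4 * t + 1) / n := by field_simp

theorem stmt_3 (p : ℝ) (hp : p ∈ Set.Ioc (0:ℝ) 1) (T : ℝ) (hT : 0 < T) :
    ∃ C > (0:ℝ), ∃ N : ℕ, ∀ n : ℕ, N ≤ n →
      ∀ t ∈ Set.Icc (0:ℝ) T,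
        |a p (n + ⌊(n:ℝ) * t⌋₊) / a p n - (1 + t) ^ (1 - 2*p)| ≤ C / n := by
  refine ⟨2 * (1 + T) * (4 * T + 1), by positivity, ⌈4 * T + 1⌉₊ + 2,
    fun n hn t ⟨ht0, htT⟩ => ?_⟩
  have hn2 : 2 ≤ n := le_add_self.trans hn
  have hn0 : (0 : ℝ) < n := by positivity
  set L := log (a p (n + ⌊(n : ℝ) * t⌋₊) / a p n)
  set M := -((2 * p - 1) * log (1 + t)) with hM
  have hratio : a p (n + ⌊(n : ℝ) * t⌋₊) / a p n = exp L :=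
    (exp_log (div_pos (a_pos hp.1 (by omega)) (a_pos hp.1 (by omega)))).symm
  have hrpow : (1 + t) ^ (1 - 2 * p) = exp M := by
    rw [rpow_def_of_pos (by linarith), hM]; ring_nf
  have hL : |L - M| ≤ (4 * T + 1) / n := by
    rw [hM, sub_neg_eq_add]
    exact (abs_log_a_add_floor_div_a_add_le hp hn2 ht0).trans (by gcongr)
  have hsmall : (4 * T + 1) / n ≤ 1 := by
    rw [div_le_one hn0]
    exact (Nat.le_ceil _).trans (by exact_mod_cast (Nat.le_add_right _ 2).trans hn)
  have hbound : exp M ≤ 1 + T := by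
    rw [← hrpow]
    calc (1 + t) ^ (1 - 2 * p) ≤ (1 + t) ^ (1 : ℝ) :=
          rpow_le_rpow_of_exponent_le (by linarith) (by linarith [hp.1])
      _ ≤ 1 + T := by rw [rpow_one]; linarith
  rw [hratio, hrpow]
  calc |exp L - exp M| ≤ 2 * exp M * |L - M| := abs_exp_sub_exp_le (hL.trans hsmall)
    _ ≤ 2 * (1 + T) * ((4 * T + 1) / n) := by gcongr
    _ = 2 * (1 + T) * (4 * T + 1) / n := by ring
end

section
/- Let p ∈ (0,1]. Under the elephant random walk hypotheses, the process (a_n·S_n)_{n≥1} is a martingale with respect to (𝓕_n)_{n≥1}: for every n ≥ 1, E[a_{n+1}·S_{n+1} | 𝓕_n] = a_n·S_n almost surely. -/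
open MeasureTheory

/-- The walk `S_n = X_1 + ⋯ + X_n`. -/
def erwS {Ω : Type*} (X : ℕ → Ω → ℝ) (n : ℕ) (ω : Ω) : ℝ :=
  ∑ k ∈ Finset.Icc 1 n, X k ω

/-! Since `E[S_{n+1} | 𝓕_n] = (1 + (2p - 1)/n) S_n`, the martingale property reduces to
`a_{n+1} (n + 2p - 1) = n a_n`, which is `Γ(x + 1) = x Γ(x)` applied at `x = n` and `x = n + 2p - 1`. -/

theorem a_succ_mul {p : ℝ} (hp : 0 < p) {n : ℕ} (hn : 1 ≤ n) :
    a p (n + 1) * (n + (2 * p - 1)) = n * a p n := by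
  have hn' : (1 : ℝ) ≤ n := by exact_mod_cast hn
  have hpos : 0 < (n : ℝ) + 2 * p - 1 := by linarith
  have hΓ_ne : Real.Gamma ((n : ℝ) + 2 * p - 1) ≠ 0 := (Real.Gamma_pos_of_pos hpos).ne'
  have hshift : ((n + 1 : ℕ) : ℝ) + 2 * p - 1 = ((n : ℝ) + 2 * p - 1) + 1 := by push_cast; ring
  rw [a, a, hshift, Real.Gamma_add_one hpos.ne', Nat.cast_add_one,
    Real.Gamma_add_one (by positivity)]
  field_simp
  ring

section Walk

variable {Ω : Type*} {m0 : MeasurableSpace Ω} (X : ℕ → Ω → ℝ)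

theorem erwS_succ (n : ℕ) : erwS X (n + 1) = erwS X n + X (n + 1) := by
  funext ω
  simp only [erwS, Pi.add_apply]
  exact Finset.sum_Icc_succ_top (Nat.le_add_left 1 n) _

variable {X}

theorem adapted_erwS {ℱ : Filtration ℕ m0} (hX : Adapted ℱ X) : Adapted ℱ (erwS X) := fun _ =>
  Finset.measurable_sum _ fun _ hk => hX.measurable_le (Finset.mem_Icc.mp hk).2

theorem integrable_erwS {μ : Measure Ω} (hX : ∀ k, 1 ≤ k → Integrable (X k) μ) (n : ℕ) :
    Integrable (erwS X n) μ :=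
  integrable_finsetSum _ fun k hk => hX k (Finset.mem_Icc.mp hk).1

theorem condExp_erwS_succ {μ : Measure Ω} [IsFiniteMeasure μ] {ℱ : Filtration ℕ m0}
    (hadapted : Adapted ℱ X) (hint : ∀ k, 1 ≤ k → Integrable (X k) μ) (n : ℕ) :
    μ[erwS X (n + 1) | ℱ n] =ᵐ[μ] erwS X n + μ[X (n + 1) | ℱ n] := by
  rw [erwS_succ]
  refine (condExp_add (integrable_erwS hint n) (hint _ (Nat.le_add_left 1 n)) _).trans ?_
  rw [condExp_of_stronglyMeasurable (ℱ.le n) (adapted_erwS hadapted n).stronglyMeasurable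
    (integrable_erwS hint n)]

end Walk

theorem stmt_8 {Ω : Type*} {m0 : MeasurableSpace Ω} (μ : Measure Ω)
    [IsProbabilityMeasure μ] (ℱ : Filtration ℕ m0)
    (X : ℕ → Ω → ℝ) (hadapted : Adapted ℱ X)
    (hXpm : ∀ n : ℕ, 1 ≤ n → ∀ᵐ ω ∂μ, X n ω = 1 ∨ X n ω = -1)
    (p : ℝ) (hp : p ∈ Set.Ioc (0:ℝ) 1)
    (hcond : ∀ n : ℕ, 1 ≤ n →
      μ[X (n+1) | ℱ n] =ᵐ[μ] fun ω => (2*p - 1) * erwS X n ω / n) :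
    ∀ n : ℕ, 1 ≤ n →
      μ[fun ω => a p (n+1) * erwS X (n+1) ω | ℱ n]
        =ᵐ[μ] fun ω => a p n * erwS X n ω := by
  intro n hn
  have hint : ∀ k, 1 ≤ k → Integrable (X k) μ := fun k hk =>
    Integrable.of_bound hadapted.measurable.aestronglyMeasurable 1 <| by
      filter_upwards [hXpm k hk] with ω hω
      rcases hω with h | h <;> simp [h]
  filter_upwards [condExp_smul (a p (n + 1)) (erwS X (n + 1)) (ℱ n),
    condExp_erwS_succ hadapted hint n, hcond n hn] with ω hsmul hsucc hstep
  change μ[a p (n + 1) • erwS X (n + 1) | ℱ n] ω = _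
  rw [hsmul, Pi.smul_apply, hsucc, Pi.add_apply, hstep, smul_eq_mul]
  have hn0 : (n : ℝ) ≠ 0 := by exact_mod_cast Nat.one_le_iff_ne_zero.mp hn
  field_simp
  linear_combination erwS X n ω * a_succ_mul hp.1 hn
end

section
/- Let 3/4 < p < 1 and t ≥ 0. Then (4p−3)·n^{4p−3}·∑_{k=n+1}^{n+⌊nt⌋} k^{2−4p} → 1 − (1+t)^{3−4p} as n → ∞. -/
/-!
With `q = 3 - 4p < 0`, the function `x ↦ x ^ (q - 1)` is decreasing, so the sum over
`n < k ≤ n + m` is squeezed between the integrals of `x ^ (q - 1)` over `[n + 1, n + m + 1]`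
and `[n, n + m]`, i.e. between differences of `x ^ q / q`. After scaling by `-q n ^ (-q)` both
bounds become `(a / n) ^ q - (b / n) ^ q` with `a / n → 1` and `b / n → 1 + t`, because
`⌊n t⌋₊ / n → t`.
-/

open Filter Topology Finset

namespace Real

theorem integral_rpow_sub_one {q a b : ℝ} (hq : q ≠ 0) (ha : 0 < a) (hb : 0 < b) :
    ∫ x in a..b, x ^ (q - 1) = (b ^ q - a ^ q) / q := by
  rw [integral_rpow (Or.inr ⟨by simpa using hq, Set.notMem_uIcc_of_lt ha hb⟩), sub_add_cancel]

theorem antitoneOn_rpow_sub_one {q : ℝ} (hq : q ≤ 1) {s : Set ℝ} (hs : s ⊆ Set.Ioi 0) :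
    AntitoneOn (fun x : ℝ => x ^ (q - 1)) s := fun _ hx _ _ hxy =>
  rpow_le_rpow_of_nonpos (hs hx) hxy (by linarith)

theorem rpow_sub_rpow_div_le_sum_range {q x : ℝ} (hq1 : q ≤ 1) (hq0 : q ≠ 0) (hx : 0 < x)
    (m : ℕ) : ((x + m) ^ q - x ^ q) / q ≤ ∑ i ∈ range m, (x + i) ^ (q - 1) := by
  rw [← integral_rpow_sub_one hq0 hx (by positivity)]
  exact AntitoneOn.integral_le_sum <| antitoneOn_rpow_sub_one hq1 fun y hy => hx.trans_le hy.1

theorem sum_range_le_rpow_sub_rpow_div {q x : ℝ} (hq1 : q ≤ 1) (hq0 : q ≠ 0) (hx : 0 < x)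
    (m : ℕ) : ∑ i ∈ range m, (x + 1 + i) ^ (q - 1) ≤ ((x + m) ^ q - x ^ q) / q := by
  rw [← integral_rpow_sub_one hq0 hx (by positivity)]
  have := AntitoneOn.sum_le_integral (x₀ := x) (a := m) <|
    antitoneOn_rpow_sub_one hq1 fun y hy => hx.trans_le hy.1
  simpa only [Nat.cast_add, Nat.cast_one, add_assoc, add_comm (1 : ℝ)] using this

end Real

theorem Finset.sum_Icc_add_eq_sum_range {M : Type*} [AddCommMonoid M] (f : ℕ → M) (n m : ℕ) :
    ∑ k ∈ Icc (n + 1) (n + m), f k = ∑ i ∈ range m, f (n + 1 + i) := by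
  rw [← Ico_add_one_right_eq_Icc, sum_Ico_eq_sum_range]
  congr 2
  omega

theorem tendsto_natCast_add_div_natCast (c : ℝ) :
    Tendsto (fun n : ℕ => ((n : ℝ) + c) / n) atTop (𝓝 1) := by
  have h := (tendsto_const_nhds (x := c)).mul tendsto_inv_atTop_nhds_zero_nat
  rw [mul_zero] at h
  refine (tendsto_const_nhds.add h).congr' ?_ |>.trans (by rw [add_zero])
  filter_upwards [eventually_ne_atTop 0] with n hn
  field_simp

theorem tendsto_natCast_add_floor_mul_add_div_natCast {t : ℝ} (ht : 0 ≤ t) (c : ℝ) :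
    Tendsto (fun n : ℕ => ((n : ℝ) + ⌊n * t⌋₊ + c) / n) atTop (𝓝 (1 + t)) := by
  have hfloor : Tendsto (fun n : ℕ => (⌊(n : ℝ) * t⌋₊ : ℝ) / n) atTop (𝓝 t) := by
    refine ((tendsto_nat_floor_mul_div_atTop ht).comp tendsto_natCast_atTop_atTop).congr fun n => ?_
    simp only [Function.comp_apply, mul_comm]
  refine ((tendsto_natCast_add_div_natCast c).add hfloor).congr fun n => ?_
  ring

theorem tendsto_rpow_neg_mul_rpow_sub_rpow {u v : ℕ → ℝ} {a b : ℝ} (q : ℝ)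
    (hu0 : ∀ n, 0 ≤ u n) (hv0 : ∀ n, 0 ≤ v n) (ha : a ≠ 0) (hb : b ≠ 0)
    (hu : Tendsto (fun n => u n / n) atTop (𝓝 a)) (hv : Tendsto (fun n => v n / n) atTop (𝓝 b)) :
    Tendsto (fun n : ℕ => (n : ℝ) ^ (-q) * (u n ^ q - v n ^ q)) atTop (𝓝 (a ^ q - b ^ q)) := by
  refine ((hu.rpow_const (Or.inl ha)).sub (hv.rpow_const (Or.inl hb))).congr fun n => ?_
  rw [Real.div_rpow (hu0 n) n.cast_nonneg, Real.div_rpow (hv0 n) n.cast_nonneg,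
    Real.rpow_neg n.cast_nonneg]
  ring

theorem stmt_12_general (p : ℝ) (hp : 3/4 < p) (t : ℝ) (ht : 0 ≤ t) :
    Filter.Tendsto
      (fun n : ℕ => (4*p - 3) * (n:ℝ) ^ (4*p - 3) *
        ∑ k ∈ Finset.Icc (n+1) (n + ⌊(n:ℝ) * t⌋₊), (k:ℝ) ^ (2 - 4*p))
      Filter.atTop (nhds (1 - (1 + t) ^ (3 - 4*p))) := by
  set q := 3 - 4 * p
  have hq1 : q ≤ 1 := by linarith
  have hq0 : q ≠ 0 := by linarith
  have hsum (n : ℕ) : ∑ k ∈ Icc (n + 1) (n + ⌊(n:ℝ) * t⌋₊), (k:ℝ) ^ (2 - 4*p) =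
      ∑ i ∈ range ⌊(n:ℝ) * t⌋₊, ((n:ℝ) + 1 + i) ^ (q - 1) := by
    rw [sum_Icc_add_eq_sum_range, show 2 - 4 * p = q - 1 by ring]
    push_cast
    rfl
  have hscale (n : ℕ) (X Y : ℝ) :
      (4*p - 3) * (n:ℝ) ^ (4*p - 3) * ((X - Y) / q) = (n:ℝ) ^ (-q) * (Y - X) := by
    rw [show 4 * p - 3 = -q by ring]
    field_simp
    ring
  have hlower := tendsto_rpow_neg_mul_rpow_sub_rpow q (fun n => by positivity)
    (fun n => by positivity) one_ne_zero (by positivity)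
    (tendsto_natCast_add_div_natCast 1) (tendsto_natCast_add_floor_mul_add_div_natCast ht 1)
  have hupper := tendsto_rpow_neg_mul_rpow_sub_rpow q (fun n => by positivity)
    (fun n => by positivity) one_ne_zero (by positivity)
    (tendsto_natCast_add_div_natCast 0) (tendsto_natCast_add_floor_mul_add_div_natCast ht 0)
  rw [Real.one_rpow] at hlower hupper
  have hcoef (n : ℕ) : 0 ≤ (4*p - 3) * (n:ℝ) ^ (4*p - 3) :=
    mul_nonneg (by linarith) (by positivity)
  refine tendsto_of_tendsto_of_tendsto_of_le_of_le' hlower hupper ?_ ?_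
  · refine Eventually.of_forall fun n => ?_
    have := Real.rpow_sub_rpow_div_le_sum_range hq1 hq0 (x := n + 1) (by positivity) ⌊(n:ℝ) * t⌋₊
    rw [hsum, add_right_comm, ← hscale]
    exact mul_le_mul_of_nonneg_left this (hcoef n)
  · filter_upwards [eventually_gt_atTop 0] with n hn
    have := Real.sum_range_le_rpow_sub_rpow_div hq1 hq0 (x := n) (by positivity) ⌊(n:ℝ) * t⌋₊
    rw [hsum, add_zero, add_zero, ← hscale]
    exact mul_le_mul_of_nonneg_left this (hcoef n)

theorem stmt_12 (p : ℝ) (hp : 3/4 < p) (hp' : p < 1) (t : ℝ) (ht : 0 ≤ t) :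
    Filter.Tendsto
      (fun n : ℕ => (4*p - 3) * (n:ℝ) ^ (4*p - 3) *
        ∑ k ∈ Finset.Icc (n+1) (n + ⌊(n:ℝ) * t⌋₊), (k:ℝ) ^ (2 - 4*p))
      Filter.atTop (nhds (1 - (1 + t) ^ (3 - 4*p))) :=
  stmt_12_general p hp t ht
end

section
/- Let 3/4 < p < 1 and t ≥ 0. Then (1/s_n²)·∑_{k=n+1}^{n+⌊nt⌋} a_k² → 1 − (1+t)^{3−4p} as n → ∞. -/
/-- `s p n = (Γ(2p)/√(4p−3))·n^{3/2−2p}`. -/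
noncomputable def s (p : ℝ) (n : ℕ) : ℝ :=
  Real.Gamma (2*p) / Real.sqrt (4*p - 3) * (n:ℝ) ^ ((3:ℝ)/2 - 2*p)

/-!
By Euler's limit formula `Γ(k) k^σ / Γ(k + σ) → 1`, so `a_k² ~ Γ(2p)² k^{2-4p}`, and for
nonnegative sequences asymptotic equivalence passes to sums over windows moving off to infinity.
The model sum `∑_{k=n+1}^{n+m} k^{2-4p}` is squeezed between integrals of `x^{2-4p}`; scaled by
`(4p-3) n^{4p-3}` these are `1 - ((n+m)/n)^{3-4p}` up to shifts by `1/n`, which for `m = ⌊nt⌋`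
tend to `1 - (1+t)^{3-4p}`.
-/

open Filter Finset Asymptotics Topology

namespace Asymptotics

theorem IsEquivalent.sum_finset_of_nonneg {f g : ℕ → ℝ} (hfg : f ~[atTop] g) (hg : ∀ k, 0 ≤ g k)
    {I : ℕ → Finset ℕ} (hI : ∀ n, ∀ k ∈ I n, n ≤ k) :
    (fun n => ∑ k ∈ I n, f k) ~[atTop] fun n => ∑ k ∈ I n, g k := by
  refine IsLittleO.of_bound fun c hc => ?_
  obtain ⟨N, hN⟩ := eventually_atTop.mp (hfg.isLittleO.def hc)
  filter_upwards [eventually_ge_atTop N] with n hn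
  calc ‖∑ k ∈ I n, f k - ∑ k ∈ I n, g k‖
      ≤ ∑ k ∈ I n, ‖f k - g k‖ := by rw [← sum_sub_distrib]; exact norm_sum_le _ _
    _ ≤ ∑ k ∈ I n, c * ‖g k‖ := sum_le_sum fun k hk => hN k (hn.trans (hI n k hk))
    _ = c * ‖∑ k ∈ I n, g k‖ := by
      simp only [Real.norm_of_nonneg (hg _), Real.norm_of_nonneg (sum_nonneg fun k _ => hg k),
        mul_sum]

end Asymptotics

section RiemannSum

variable {r : ℝ}

theorem integral_rpow_le_sum_Icc (hr : r ≤ 0) (n m : ℕ) :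
    ∫ x in (n + 1 : ℝ)..(n + m + 1), x ^ r ≤ ∑ k ∈ Icc (n + 1) (n + m), (k : ℝ) ^ r := by
  have h := AntitoneOn.integral_le_sum_Ico (f := fun x : ℝ => x ^ r) (a := n + 1) (b := n + m + 1)
    (by omega) ((Real.antitoneOn_rpow_Ioi_of_exponent_nonpos hr).mono fun x hx => ?_)
  · rw [Ico_add_one_right_eq_Icc] at h
    exact_mod_cast h
  · exact lt_of_lt_of_le (by positivity) hx.1

theorem sum_Icc_rpow_le_integral (hr : r ≤ 0) {n : ℕ} (hn : 0 < n) (m : ℕ) :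
    ∑ k ∈ Icc (n + 1) (n + m), (k : ℝ) ^ r ≤ ∫ x in (n : ℝ)..(n + m), x ^ r := by
  have h := AntitoneOn.sum_le_integral_Ico (f := fun x : ℝ => x ^ r) (a := n) (b := n + m)
    (by omega) ((Real.antitoneOn_rpow_Ioi_of_exponent_nonpos hr).mono fun x hx => ?_)
  · rw [sum_Ico_add' (fun k : ℕ => (k : ℝ) ^ r), Ico_add_one_right_eq_Icc] at h
    exact_mod_cast h
  · exact lt_of_lt_of_le (by exact_mod_cast hn) hx.1

end RiemannSum

theorem neg_mul_rpow_neg_mul_integral_rpow_sub_one {β a b y : ℝ} (hβ : β ≠ 0) (ha : 0 < a)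
    (hb : 0 < b) (hy : 0 < y) :
    -β * y ^ (-β) * ∫ x in a..b, x ^ (β - 1) = (a / y) ^ β - (b / y) ^ β := by
  have h0 : (0 : ℝ) ∉ Set.uIcc a b := by
    rw [Set.mem_uIcc]; rintro (⟨h, -⟩ | ⟨h, -⟩) <;> linarith
  rw [integral_rpow (Or.inr ⟨by intro h; apply hβ; linarith, h0⟩), sub_add_cancel,
    Real.div_rpow ha.le hy.le, Real.div_rpow hb.le hy.le, Real.rpow_neg hy.le]
  have : y ^ β ≠ 0 := (Real.rpow_pos_of_pos hy β).ne'
  field_simp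
  ring

theorem tendsto_mul_sum_Icc_rpow {β t : ℝ} (hβ : β < 0) {m : ℕ → ℕ}
    (hm : Tendsto (fun n : ℕ => (m n : ℝ) / n) atTop (𝓝 t)) :
    Tendsto (fun n : ℕ => -β * (n : ℝ) ^ (-β) * ∑ k ∈ Icc (n + 1) (n + m n), (k : ℝ) ^ (β - 1))
      atTop (𝓝 (1 - (1 + t) ^ β)) := by
  have ht : 0 ≤ t := ge_of_tendsto' hm fun n => by positivity
  have hself : Tendsto (fun n : ℕ => (n : ℝ) / n) atTop (𝓝 1) :=
    tendsto_const_nhds.congr' <| by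
      filter_upwards [eventually_ne_atTop 0] with n hn
      rw [div_self (by exact_mod_cast hn)]
  have hinv : Tendsto (fun n : ℕ => (1 : ℝ) / n) atTop (𝓝 0) := tendsto_one_div_atTop_nhds_zero_nat
  have hlim : ∀ u v : ℕ → ℝ, Tendsto u atTop (𝓝 1) → Tendsto v atTop (𝓝 (1 + t)) →
      Tendsto (fun n => u n ^ β - v n ^ β) atTop (𝓝 (1 - (1 + t) ^ β)) := fun u v hu hv => by
    simpa using (hu.rpow_const (Or.inl one_ne_zero)).sub (hv.rpow_const (Or.inl (by positivity)))
  have hlower := hlim (fun n : ℕ => ((n : ℝ) + 1) / n) (fun n : ℕ => ((n : ℝ) + m n + 1) / n)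
    (by simp_rw [add_div]; simpa using hself.add hinv)
    (by simp_rw [add_div]; simpa using (hself.add hm).add hinv)
  have hupper := hlim (fun n : ℕ => (n : ℝ) / n) (fun n : ℕ => ((n : ℝ) + m n) / n) hself
    (by simp_rw [add_div]; exact hself.add hm)
  have hcoef (n : ℕ) : 0 ≤ -β * (n : ℝ) ^ (-β) := mul_nonneg (by linarith) (by positivity)
  refine tendsto_of_tendsto_of_tendsto_of_le_of_le' hlower hupper ?_ ?_ <;>
    filter_upwards [eventually_gt_atTop 0] with n hn <;>
    have hn' : (0 : ℝ) < n := by exact_mod_cast hn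
  · rw [← neg_mul_rpow_neg_mul_integral_rpow_sub_one hβ.ne (by positivity) (by positivity) hn']
    exact mul_le_mul_of_nonneg_left (integral_rpow_le_sum_Icc (by linarith) n (m n)) (hcoef n)
  · rw [← neg_mul_rpow_neg_mul_integral_rpow_sub_one hβ.ne hn' (by positivity) hn']
    exact mul_le_mul_of_nonneg_left (sum_Icc_rpow_le_integral (by linarith) hn (m n)) (hcoef n)

namespace Real

theorem Gamma_add_nat_eq_mul_prod_s13 {σ : ℝ} (hσ : 0 < σ) (n : ℕ) :
    Gamma (σ + n) = Gamma σ * ∏ j ∈ range n, (σ + j) := by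
  induction n with
  | zero => simp
  | succ n ih =>
    rw [Nat.cast_succ, ← add_assoc, Gamma_add_one (by positivity), ih, prod_range_succ]
    ring

theorem tendsto_Gamma_mul_rpow_div_Gamma_add {σ : ℝ} (hσ : 0 < σ) :
    Tendsto (fun n : ℕ => Gamma n * (n : ℝ) ^ σ / Gamma (n + σ)) atTop (𝓝 1) := by
  have hΓσ : Gamma σ ≠ 0 := (Gamma_pos_of_pos hσ).ne'
  have hEuler : Tendsto (fun n => GammaSeq σ n / Gamma σ) atTop (𝓝 1) := by
    simpa [div_self hΓσ] using (GammaSeq_tendsto_Gamma σ).div_const (Gamma σ)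
  have h := hEuler.div (tendsto_natCast_div_add_atTop σ) one_ne_zero
  rw [div_one] at h
  refine h.congr' ?_
  filter_upwards [eventually_gt_atTop 0] with n hn
  have hn' : (0 : ℝ) < n := by exact_mod_cast hn
  have hprod : (∏ j ∈ range (n + 1), (σ + j)) * Gamma σ = (n + σ) * Gamma (n + σ) := by
    rw [mul_comm, ← Gamma_add_nat_eq_mul_prod_s13 hσ, Nat.cast_succ, ← add_assoc,
      Gamma_add_one (by positivity), add_comm σ]
  have hfact : (n.factorial : ℝ) = n * Gamma n := by
    rw [← Gamma_nat_eq_factorial, Gamma_add_one hn'.ne']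
  have : Gamma (n + σ) ≠ 0 := (Gamma_pos_of_pos (by positivity)).ne'
  simp only [Pi.div_apply, GammaSeq]
  rw [hfact, div_div _ (∏ j ∈ range (n + 1), (σ + j)), hprod]
  field_simp

end Real

theorem a_sq_isEquivalent {p : ℝ} (hp : 1 / 2 < p) :
    (fun k : ℕ => a p k ^ 2) ~[atTop] fun k => Real.Gamma (2 * p) ^ 2 * (k : ℝ) ^ (2 - 4 * p) := by
  refine isEquivalent_of_tendsto_one ?_
  have h := (Real.tendsto_Gamma_mul_rpow_div_Gamma_add (σ := 2 * p - 1) (by linarith)).pow 2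
  rw [one_pow] at h
  refine h.congr' ?_
  filter_upwards [eventually_gt_atTop 0] with k hk
  have hk' : (0 : ℝ) < k := by exact_mod_cast hk
  have hΓ2p : Real.Gamma (2 * p) ≠ 0 := (Real.Gamma_pos_of_pos (by linarith)).ne'
  have hΓk : Real.Gamma (k + (2 * p - 1)) ≠ 0 := (Real.Gamma_pos_of_pos (by linarith)).ne'
  have hpow : (k : ℝ) ^ (2 - 4 * p) = (((k : ℝ) ^ (2 * p - 1)) ^ 2)⁻¹ := by
    rw [← Real.rpow_natCast, ← Real.rpow_mul hk'.le, ← Real.rpow_neg hk'.le]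
    congr 1
    push_cast
    ring
  have : (k : ℝ) ^ (2 * p - 1) ≠ 0 := (Real.rpow_pos_of_pos hk' _).ne'
  rw [Pi.div_apply, a, hpow, ← add_sub_assoc]
  field_simp

theorem s_sq {p : ℝ} (hp : 3 / 4 ≤ p) (n : ℕ) :
    s p n ^ 2 = Real.Gamma (2 * p) ^ 2 / (4 * p - 3) * (n : ℝ) ^ (3 - 4 * p) := by
  rw [s, mul_pow, div_pow, Real.sq_sqrt (by linarith), ← Real.rpow_natCast (_ ^ _) 2,
    ← Real.rpow_mul n.cast_nonneg]
  congr 2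
  push_cast
  ring

theorem tendsto_one_div_s_sq_mul_sum_rpow {p t : ℝ} (hp : 3 / 4 < p) {m : ℕ → ℕ}
    (hm : Tendsto (fun n : ℕ => (m n : ℝ) / n) atTop (𝓝 t)) :
    Tendsto (fun n : ℕ => 1 / s p n ^ 2 *
        ∑ k ∈ Icc (n + 1) (n + m n), Real.Gamma (2 * p) ^ 2 * (k : ℝ) ^ (2 - 4 * p))
      atTop (𝓝 (1 - (1 + t) ^ (3 - 4 * p))) := by
  refine (tendsto_mul_sum_Icc_rpow (β := 3 - 4 * p) (by linarith) hm).congr' ?_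
  filter_upwards [eventually_gt_atTop 0] with n hn
  have hn' : (0 : ℝ) < n := by exact_mod_cast hn
  have : Real.Gamma (2 * p) ≠ 0 := (Real.Gamma_pos_of_pos (by linarith)).ne'
  have : (n : ℝ) ^ (3 - 4 * p) ≠ 0 := (Real.rpow_pos_of_pos hn' _).ne'
  have : 4 * p - 3 ≠ 0 := by linarith
  rw [s_sq hp.le, ← mul_sum, Real.rpow_neg hn'.le, show 3 - 4 * p - 1 = 2 - 4 * p by ring]
  field_simp
  ring

theorem stmt_13_general (p : ℝ) (hp : 3/4 < p) (t : ℝ) (ht : 0 ≤ t) :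
    Filter.Tendsto
      (fun n : ℕ => (1 / (s p n)^2) *
        ∑ k ∈ Finset.Icc (n+1) (n + ⌊(n:ℝ) * t⌋₊), (a p k)^2)
      Filter.atTop (nhds (1 - (1 + t) ^ (3 - 4*p))) := by
  have hfloor : Tendsto (fun n : ℕ => (⌊(n : ℝ) * t⌋₊ : ℝ) / n) atTop (𝓝 t) := by
    simpa [Function.comp_def, mul_comm] using
      (tendsto_nat_floor_mul_div_atTop ht).comp tendsto_natCast_atTop_atTop
  have hsum := (a_sq_isEquivalent (p := p) (by linarith)).sum_finset_of_nonneg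
    (fun k => by positivity) (I := fun n => Icc (n + 1) (n + ⌊(n : ℝ) * t⌋₊))
    fun n k hk => by linarith [(mem_Icc.mp hk).1]
  exact (IsEquivalent.refl.mul hsum).symm.tendsto_nhds
    (tendsto_one_div_s_sq_mul_sum_rpow hp hfloor)

theorem stmt_13 (p : ℝ) (hp : 3/4 < p) (hp' : p < 1) (t : ℝ) (ht : 0 ≤ t) :
    Filter.Tendsto
      (fun n : ℕ => (1 / (s p n)^2) *
        ∑ k ∈ Finset.Icc (n+1) (n + ⌊(n:ℝ) * t⌋₊), (a p k)^2)
      Filter.atTop (nhds (1 - (1 + t) ^ (3 - 4*p))) :=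
  stmt_13_general p hp t ht
end

section
/- Let 3/4 < p < 1. Then the series ∑_{k=n+1}^∞ a_k⁴ converges for every n, and n·(1/s_n⁴)·∑_{k=n+1}^∞ a_k⁴ → (4p−3)²/(8p−5) as n → ∞; in particular (1/s_n⁴)·∑_{k=n+1}^∞ a_k⁴ → 0. -/
open Real Filter Topology Set

theorem hasSum_sub_succ_of_antitone {f : ℕ → ℝ} {l : ℝ} (hf : Antitone f)
    (hl : Tendsto f atTop (𝓝 l)) : HasSum (fun k ↦ f k - f (k + 1)) (f 0 - l) := by
  rw [hasSum_iff_tendsto_nat_of_nonneg fun k ↦ sub_nonneg.2 (hf k.le_succ)]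
  simp only [Finset.sum_range_sub']
  exact hl.const_sub (f 0)

section PSeriesTail

variable {β x : ℝ}

theorem exists_rpow_sub_rpow_add_one_eq (β : ℝ) (hx : 0 < x) :
    ∃ c ∈ Ioo x (x + 1), x ^ (1 - β) - (x + 1) ^ (1 - β) = (β - 1) * c ^ (-β) := by
  have hcont : ContinuousOn (fun t : ℝ ↦ t ^ (1 - β)) (Icc x (x + 1)) :=
    continuousOn_id.rpow_const fun t ht ↦ Or.inl (hx.trans_le ht.1).ne'
  have hderiv : ∀ t ∈ Ioo x (x + 1),
      HasDerivAt (fun t : ℝ ↦ t ^ (1 - β)) ((1 - β) * t ^ (1 - β - 1)) t :=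
    fun t ht ↦ hasDerivAt_rpow_const (Or.inl (hx.trans ht.1).ne')
  obtain ⟨c, hc, hslope⟩ := exists_hasDerivAt_eq_slope _ _ (lt_add_one x) hcont hderiv
  refine ⟨c, hc, ?_⟩
  rw [add_sub_cancel_left, div_one, show 1 - β - 1 = -β by ring] at hslope
  linarith

theorem mul_rpow_add_one_le_rpow_sub_rpow (hβ : 1 ≤ β) (hx : 0 < x) :
    (β - 1) * (x + 1) ^ (-β) ≤ x ^ (1 - β) - (x + 1) ^ (1 - β) := by
  obtain ⟨c, hc, heq⟩ := exists_rpow_sub_rpow_add_one_eq β hx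
  rw [heq]
  exact mul_le_mul_of_nonneg_left
    (rpow_le_rpow_of_nonpos (hx.trans hc.1) hc.2.le (by linarith)) (by linarith)

theorem rpow_sub_rpow_add_one_le_mul_rpow (hβ : 1 ≤ β) (hx : 0 < x) :
    x ^ (1 - β) - (x + 1) ^ (1 - β) ≤ (β - 1) * x ^ (-β) := by
  obtain ⟨c, hc, heq⟩ := exists_rpow_sub_rpow_add_one_eq β hx
  rw [heq]
  exact mul_le_mul_of_nonneg_left (rpow_le_rpow_of_nonpos hx hc.1.le (by linarith)) (by linarith)

theorem hasSum_rpow_sub_rpow_add_one (hβ : 1 < β) (hx : 0 < x) :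
    HasSum (fun k : ℕ ↦ (x + k) ^ (1 - β) - (x + k + 1) ^ (1 - β)) (x ^ (1 - β)) := by
  have hanti : Antitone fun k : ℕ ↦ (x + k) ^ (1 - β) := fun i j hij ↦
    rpow_le_rpow_of_nonpos (by positivity) (by gcongr) (by linarith)
  have hlim : Tendsto (fun k : ℕ ↦ (x + k) ^ (1 - β)) atTop (𝓝 0) := by
    rw [show 1 - β = -(β - 1) by ring]
    exact (tendsto_rpow_neg_atTop (by linarith)).comp
      (tendsto_atTop_add_const_left _ _ tendsto_natCast_atTop_atTop)
  simpa [add_assoc] using hasSum_sub_succ_of_antitone hanti hlim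

theorem summable_add_one_add_rpow_neg (hβ : 1 < β) (hx : 0 ≤ x) :
    Summable fun k : ℕ ↦ (x + 1 + k) ^ (-β) := by
  refine ((Real.summable_one_div_nat_add_rpow (x + 1) β).2 hβ).congr fun k ↦ ?_
  rw [abs_of_pos (by positivity), rpow_neg (by positivity), one_div, add_comm]

theorem rpow_div_le_tsum_add_one_add_rpow_neg (hβ : 1 < β) (hx : 0 ≤ x) :
    (x + 1) ^ (1 - β) / (β - 1) ≤ ∑' k : ℕ, (x + 1 + k) ^ (-β) := by
  have hsum := (hasSum_rpow_sub_rpow_add_one hβ (x := x + 1) (by positivity)).div_const (β - 1)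
  refine hsum.tsum_eq ▸ hsum.summable.tsum_le_tsum (fun k ↦ ?_)
    (summable_add_one_add_rpow_neg hβ hx)
  rw [div_le_iff₀ (by linarith), mul_comm]
  exact rpow_sub_rpow_add_one_le_mul_rpow hβ.le (by positivity)

theorem tsum_add_one_add_rpow_neg_le_rpow_div (hβ : 1 < β) (hx : 0 < x) :
    ∑' k : ℕ, (x + 1 + k) ^ (-β) ≤ x ^ (1 - β) / (β - 1) := by
  have hsum := (hasSum_rpow_sub_rpow_add_one hβ hx).div_const (β - 1)
  refine hsum.tsum_eq ▸ (summable_add_one_add_rpow_neg hβ hx.le).tsum_le_tsum (fun k ↦ ?_)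
    hsum.summable
  rw [le_div_iff₀ (by linarith), add_right_comm, mul_comm]
  exact mul_rpow_add_one_le_rpow_sub_rpow hβ.le (by positivity)

theorem tendsto_rpow_mul_tsum_add_one_add_rpow_neg (hβ : 1 < β) :
    Tendsto (fun n : ℕ ↦ (n : ℝ) ^ (β - 1) * ∑' k : ℕ, ((n : ℝ) + 1 + k) ^ (-β))
      atTop (𝓝 (1 / (β - 1))) := by
  have hratio : Tendsto (fun n : ℕ ↦ ((n : ℝ) / (n + 1)) ^ (β - 1) / (β - 1)) atTop
      (𝓝 (1 / (β - 1))) := by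
    simpa using ((tendsto_natCast_div_add_atTop (1 : ℝ)).rpow_const
      (Or.inr (by linarith : 0 ≤ β - 1))).div_const (β - 1)
  refine tendsto_of_tendsto_of_tendsto_of_le_of_le' hratio tendsto_const_nhds ?_ ?_
  all_goals filter_upwards [eventually_gt_atTop 0] with n hn
  all_goals have hn : (0 : ℝ) < n := Nat.cast_pos.2 hn
  · calc ((n : ℝ) / (n + 1)) ^ (β - 1) / (β - 1)
        = (n : ℝ) ^ (β - 1) * (((n : ℝ) + 1) ^ (1 - β) / (β - 1)) := by
          rw [div_rpow hn.le (by positivity), show 1 - β = -(β - 1) by ring,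
            rpow_neg (by positivity)]
          ring
      _ ≤ _ := by gcongr; exact rpow_div_le_tsum_add_one_add_rpow_neg hβ hn.le
  · calc (n : ℝ) ^ (β - 1) * ∑' k : ℕ, ((n : ℝ) + 1 + k) ^ (-β)
        ≤ (n : ℝ) ^ (β - 1) * ((n : ℝ) ^ (1 - β) / (β - 1)) := by
          gcongr; exact tsum_add_one_add_rpow_neg_le_rpow_div hβ hn
      _ = 1 / (β - 1) := by
          rw [mul_div_assoc', ← rpow_add hn, show β - 1 + (1 - β) = 0 by ring, rpow_zero]

end PSeriesTail

section Wendel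

variable {x t : ℝ}

theorem rpow_mul_mul_rpow_of_add_eq_one {g y a b : ℝ} (hg : 0 < g) (hy : 0 ≤ y)
    (hab : a + b = 1) :
    g ^ a * (y * g) ^ b = g * y ^ b := by
  rw [mul_rpow hy hg.le, mul_left_comm, ← rpow_add hg, hab, rpow_one, mul_comm]

theorem Gamma_add_le_Gamma_mul_rpow (hx : 0 < x) (ht₀ : 0 < t) (ht₁ : t < 1) :
    Gamma (x + t) ≤ Gamma x * x ^ t := by
  have h := Gamma_mul_add_mul_le_rpow_Gamma_mul_rpow_Gamma (s := x) (t := x + 1) hx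
    (by linarith) (sub_pos.2 ht₁) ht₀ (sub_add_cancel 1 t)
  rwa [show (1 - t) * x + t * (x + 1) = x + t by ring, Gamma_add_one hx.ne',
    rpow_mul_mul_rpow_of_add_eq_one (Gamma_pos_of_pos hx) hx.le (sub_add_cancel 1 t)] at h

theorem mul_Gamma_le_Gamma_add_mul_rpow (hx : 0 < x) (ht₀ : 0 < t) (ht₁ : t < 1) :
    x * Gamma x ≤ Gamma (x + t) * (x + t) ^ (1 - t) := by
  have hxt : 0 < x + t := by linarith
  have h := Gamma_mul_add_mul_le_rpow_Gamma_mul_rpow_Gamma (s := x + t) (t := x + t + 1) hxt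
    (by linarith) ht₀ (sub_pos.2 ht₁) (add_sub_cancel t 1)
  rwa [show t * (x + t) + (1 - t) * (x + t + 1) = x + 1 by ring, Gamma_add_one hx.ne',
    Gamma_add_one hxt.ne', rpow_mul_mul_rpow_of_add_eq_one (Gamma_pos_of_pos hxt) hxt.le
    (add_sub_cancel t 1)] at h

end Wendel

section Coefficients

variable {p : ℝ} {k : ℕ}

theorem Gamma_mul_rpow_le_a (hp : 1 / 2 < p) (hp₁ : p < 1) (hk : 0 < k) :
    Gamma (2 * p) * (k : ℝ) ^ (1 - 2 * p) ≤ a p k := by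
  have hx : (0 : ℝ) < k := Nat.cast_pos.2 hk
  have hΓ := Gamma_add_le_Gamma_mul_rpow hx (t := 2 * p - 1) (by linarith) (by linarith)
  rw [a, add_sub_assoc, le_div_iff₀ (Gamma_pos_of_pos (by linarith))]
  calc Gamma (2 * p) * (k : ℝ) ^ (1 - 2 * p) * Gamma (k + (2 * p - 1))
      ≤ Gamma (2 * p) * (k : ℝ) ^ (1 - 2 * p) * (Gamma k * (k : ℝ) ^ (2 * p - 1)) := by
        gcongr
    _ = Gamma (2 * p) * Gamma k * (k : ℝ) ^ (1 - 2 * p + (2 * p - 1)) := by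
        rw [rpow_add hx]; ring
    _ = Gamma (2 * p) * Gamma k := by simp

theorem a_le_Gamma_mul_rpow_mul (hp : 1 / 2 < p) (hp₁ : p < 1) (hk : 0 < k) :
    a p k ≤ Gamma (2 * p) * (k : ℝ) ^ (1 - 2 * p) * (1 + 1 / k) := by
  have hx : (0 : ℝ) < k := Nat.cast_pos.2 hk
  have hΓ := mul_Gamma_le_Gamma_add_mul_rpow hx (t := 2 * p - 1) (by linarith) (by linarith)
  have hpow :
      ((k : ℝ) + (2 * p - 1)) ^ (1 - (2 * p - 1)) ≤ (k + 1) * (k : ℝ) ^ (1 - 2 * p) := by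
    rw [show 1 - (2 * p - 1) = 1 + (1 - 2 * p) by ring, rpow_add (by linarith), rpow_one]
    exact mul_le_mul (by linarith) (rpow_le_rpow_of_nonpos hx (by linarith) (by linarith))
      (rpow_pos_of_pos (by linarith) _).le (by linarith)
  have hΓpos : 0 < Gamma (k + (2 * p - 1)) := Gamma_pos_of_pos (by linarith)
  rw [a, add_sub_assoc, div_le_iff₀ hΓpos]
  calc Gamma (2 * p) * Gamma k = Gamma (2 * p) * (k * Gamma k) / k := by field_simp
    _ ≤ Gamma (2 * p) * (Gamma (k + (2 * p - 1)) * ((k + 1) * (k : ℝ) ^ (1 - 2 * p))) / k := by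
        gcongr Gamma (2 * p) * ?_ / (k : ℝ)
        exact hΓ.trans (mul_le_mul_of_nonneg_left hpow hΓpos.le)
    _ = Gamma (2 * p) * (k : ℝ) ^ (1 - 2 * p) * (1 + 1 / k) * Gamma (k + (2 * p - 1)) := by
        field_simp

theorem Gamma_pow_four_mul_rpow_le_a_pow_four (hp : 1 / 2 < p) (hp₁ : p < 1) (hk : 0 < k) :
    Gamma (2 * p) ^ 4 * (k : ℝ) ^ (-(8 * p - 4)) ≤ a p k ^ 4 := by
  have hx : (0 : ℝ) < k := Nat.cast_pos.2 hk
  have hG : 0 < Gamma (2 * p) := Gamma_pos_of_pos (by linarith)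
  calc Gamma (2 * p) ^ 4 * (k : ℝ) ^ (-(8 * p - 4))
      = (Gamma (2 * p) * (k : ℝ) ^ (1 - 2 * p)) ^ 4 := by
        rw [mul_pow, ← rpow_mul_natCast hx.le]
        congr 2
        push_cast
        ring
    _ ≤ a p k ^ 4 := pow_le_pow_left₀ (by positivity) (Gamma_mul_rpow_le_a hp hp₁ hk) 4

theorem a_pow_four_le (hp : 1 / 2 < p) (hp₁ : p < 1) {m : ℝ} (hm : 0 < m) (hmk : m ≤ k) :
    a p k ^ 4 ≤ Gamma (2 * p) ^ 4 * (1 + 1 / m) ^ 4 * (k : ℝ) ^ (-(8 * p - 4)) := by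
  have hk : 0 < k := Nat.cast_pos.1 (hm.trans_le hmk)
  have hx : (0 : ℝ) < k := hm.trans_le hmk
  have hG : 0 < Gamma (2 * p) := Gamma_pos_of_pos (by linarith)
  have ha : 0 ≤ a p k := (by positivity : 0 ≤ Gamma (2 * p) * (k : ℝ) ^ (1 - 2 * p)).trans
    (Gamma_mul_rpow_le_a hp hp₁ hk)
  calc a p k ^ 4 ≤ (Gamma (2 * p) * (k : ℝ) ^ (1 - 2 * p) * (1 + 1 / k)) ^ 4 :=
        pow_le_pow_left₀ ha (a_le_Gamma_mul_rpow_mul hp hp₁ hk) 4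
    _ ≤ (Gamma (2 * p) * (k : ℝ) ^ (1 - 2 * p) * (1 + 1 / m)) ^ 4 := by gcongr
    _ = Gamma (2 * p) ^ 4 * (1 + 1 / m) ^ 4 * (k : ℝ) ^ (-(8 * p - 4)) := by
        rw [mul_pow, mul_pow, ← rpow_mul_natCast hx.le]
        ring_nf

end Coefficients

section Tail

variable {p : ℝ}

theorem Gamma_pow_four_mul_rpow_le_a_add_pow_four (hp : 1 / 2 < p) (hp₁ : p < 1) (n k : ℕ) :
    Gamma (2 * p) ^ 4 * ((n : ℝ) + 1 + k) ^ (-(8 * p - 4)) ≤ a p (n + 1 + k) ^ 4 := by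
  have h := Gamma_pow_four_mul_rpow_le_a_pow_four hp hp₁ (k := n + 1 + k) (by omega)
  push_cast at h
  exact h

theorem a_add_pow_four_le (hp : 1 / 2 < p) (hp₁ : p < 1) (n k : ℕ) :
    a p (n + 1 + k) ^ 4 ≤
      Gamma (2 * p) ^ 4 * (1 + 1 / ((n : ℝ) + 1)) ^ 4 * ((n : ℝ) + 1 + k) ^ (-(8 * p - 4)) := by
  have h := a_pow_four_le hp hp₁ (k := n + 1 + k) (m := n + 1) (by positivity)
    (by push_cast; linarith [(Nat.cast_nonneg k : (0 : ℝ) ≤ k)])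
  push_cast at h
  exact h

theorem summable_a_pow_four (hp : 5 / 8 < p) (hp₁ : p < 1) (n : ℕ) :
    Summable fun k : ℕ ↦ a p (n + 1 + k) ^ 4 :=
  Summable.of_nonneg_of_le (fun k ↦ by positivity) (a_add_pow_four_le (by linarith) hp₁ n)
    ((summable_add_one_add_rpow_neg (by linarith) n.cast_nonneg).mul_left _)

theorem tendsto_rpow_mul_tsum_a_pow_four (hp : 5 / 8 < p) (hp₁ : p < 1) :
    Tendsto (fun n : ℕ ↦ (n : ℝ) ^ (8 * p - 5) * ∑' k : ℕ, a p (n + 1 + k) ^ 4) atTop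
      (𝓝 (Gamma (2 * p) ^ 4 / (8 * p - 5))) := by
  have hβ : 1 < 8 * p - 4 := by linarith
  have hS := tendsto_rpow_mul_tsum_add_one_add_rpow_neg hβ
  rw [show 8 * p - 4 - 1 = 8 * p - 5 by ring] at hS
  have hc : Tendsto (fun n : ℕ ↦ (1 + 1 / ((n : ℝ) + 1)) ^ 4) atTop (𝓝 1) := by
    simpa using ((tendsto_one_div_add_atTop_nhds_zero_nat (𝕜 := ℝ)).const_add 1).pow 4
  set G := Gamma (2 * p) ^ 4
  have hlo : Tendsto (fun n : ℕ ↦ G * ((n : ℝ) ^ (8 * p - 5) *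
      ∑' k : ℕ, ((n : ℝ) + 1 + k) ^ (-(8 * p - 4)))) atTop (𝓝 (G / (8 * p - 5))) := by
    rw [div_eq_mul_one_div]
    exact hS.const_mul G
  have hhi : Tendsto (fun n : ℕ ↦ G * (1 + 1 / ((n : ℝ) + 1)) ^ 4 * ((n : ℝ) ^ (8 * p - 5) *
      ∑' k : ℕ, ((n : ℝ) + 1 + k) ^ (-(8 * p - 4)))) atTop (𝓝 (G / (8 * p - 5))) := by
    convert (hc.const_mul G).mul hS using 2
    ring
  refine tendsto_of_tendsto_of_tendsto_of_le_of_le hlo hhi (fun n ↦ ?_) (fun n ↦ ?_)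
  · rw [mul_left_comm, ← tsum_mul_left]
    refine mul_le_mul_of_nonneg_left ?_ (by positivity)
    exact ((summable_add_one_add_rpow_neg hβ n.cast_nonneg).mul_left G).tsum_le_tsum
      (Gamma_pow_four_mul_rpow_le_a_add_pow_four (by linarith) hp₁ n)
      (summable_a_pow_four hp hp₁ n)
  · rw [mul_left_comm (G * _), ← tsum_mul_left (a := G * _)]
    refine mul_le_mul_of_nonneg_left ?_ (by positivity)
    exact (summable_a_pow_four hp hp₁ n).tsum_le_tsum (a_add_pow_four_le (by linarith) hp₁ n)
      ((summable_add_one_add_rpow_neg hβ n.cast_nonneg).mul_left _)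

end Tail

theorem s_pow_four {p : ℝ} (hp : 3 / 4 ≤ p) (n : ℕ) :
    s p n ^ 4 = Gamma (2 * p) ^ 4 / (4 * p - 3) ^ 2 * (n : ℝ) ^ (6 - 8 * p) := by
  rw [s, mul_pow, div_pow, ← rpow_mul_natCast n.cast_nonneg,
    show √(4 * p - 3) ^ 4 = (√(4 * p - 3) ^ 2) ^ 2 by ring, sq_sqrt (by linarith)]
  congr 2
  push_cast
  ring

theorem natCast_mul_one_div_s_pow_four {p : ℝ} (hp : 3 / 4 < p) {n : ℕ} (hn : 0 < n) :
    (n : ℝ) * (1 / s p n ^ 4) =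
      (4 * p - 3) ^ 2 / Gamma (2 * p) ^ 4 * (n : ℝ) ^ (8 * p - 5) := by
  have hn : (0 : ℝ) < n := Nat.cast_pos.2 hn
  have hG : 0 < Gamma (2 * p) := Gamma_pos_of_pos (by linarith)
  have hq : 0 < (4 * p - 3) ^ 2 := by nlinarith
  rw [s_pow_four hp.le, show 8 * p - 5 = -(6 - 8 * p) + 1 by ring, rpow_add_one hn.ne',
    rpow_neg hn.le]
  field_simp

theorem stmt_14 (p : ℝ) (hp : 3/4 < p) (hp' : p < 1) :
    (∀ n : ℕ, Summable (fun k : ℕ => a p (n + 1 + k) ^ 4)) ∧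
    Filter.Tendsto
      (fun n : ℕ => (n:ℝ) * (1 / (s p n)^4) * ∑' k : ℕ, a p (n + 1 + k) ^ 4)
      Filter.atTop (nhds ((4*p - 3)^2 / (8*p - 5))) ∧
    Filter.Tendsto
      (fun n : ℕ => (1 / (s p n)^4) * ∑' k : ℕ, a p (n + 1 + k) ^ 4)
      Filter.atTop (nhds 0) := by
  have hG : 0 < Gamma (2 * p) := Gamma_pos_of_pos (by linarith)
  have hscale : ∀ᶠ n : ℕ in atTop, (4 * p - 3) ^ 2 / Gamma (2 * p) ^ 4 *
      ((n : ℝ) ^ (8 * p - 5) * ∑' k : ℕ, a p (n + 1 + k) ^ 4) =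
      n * (1 / s p n ^ 4) * ∑' k : ℕ, a p (n + 1 + k) ^ 4 := by
    filter_upwards [eventually_gt_atTop 0] with n hn
    rw [natCast_mul_one_div_s_pow_four hp hn, mul_assoc]
  have hmain := ((tendsto_rpow_mul_tsum_a_pow_four (by linarith) hp').const_mul
    ((4 * p - 3) ^ 2 / Gamma (2 * p) ^ 4)).congr' hscale
  rw [show (4 * p - 3) ^ 2 / Gamma (2 * p) ^ 4 * (Gamma (2 * p) ^ 4 / (8 * p - 5)) =
    (4 * p - 3) ^ 2 / (8 * p - 5) by field_simp] at hmain
  refine ⟨summable_a_pow_four (by linarith) hp', hmain, ?_⟩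
  refine ((tendsto_one_div_atTop_nhds_zero_nat (𝕜 := ℝ)).mul hmain |>.congr' ?_).trans
    (by rw [zero_mul])
  filter_upwards [eventually_gt_atTop 0] with n hn
  have hn : (n : ℝ) ≠ 0 := Nat.cast_ne_zero.2 hn.ne'
  field_simp
end

section
/- Let 3/4 < p < 1. Under the elephant random walk hypotheses, set ΔM_k = a_k·(X_k − E[X_k | 𝓕_{k−1}]) for k ≥ 2. Then for every ε > 0 and every t ≥ 0, almost surely (1/s_n²)·∑_{k=n+1}^{n+⌊nt⌋} E[(ΔM_k)²·1_{{|ΔM_k| > ε·s_n}} | 𝓕_{k−1}] → 0 as n → ∞. -/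
/-!
The increments are bounded, |ΔM_k| ≤ 2 a_k, and log-convexity of Γ gives
a_k ≤ Γ(2p) n^{1-2p} = √(4p-3) n^{-1/2} s_n for every k > n. So once n is large, every
indicator in the sum vanishes almost surely and the normalised sums are eventually zero.
-/

open MeasureTheory

/-- The martingale difference `ΔM_k = a_k (X_k − E[X_k | 𝓕_{k−1}])`. -/
noncomputable def dM {Ω : Type*} {m0 : MeasurableSpace Ω} (μ : Measure Ω)
    (ℱ : Filtration ℕ m0) (p : ℝ) (X : ℕ → Ω → ℝ) (k : ℕ) (ω : Ω) : ℝ :=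
  a p k * (X k ω - (μ[X k | ℱ (k-1)]) ω)

namespace Real

theorem Gamma_add_one_le_rpow_mul_Gamma {x t : ℝ} (hxt : 0 < x + t) (ht₀ : 0 < t) (ht₁ : t < 1) :
    Gamma (x + 1) ≤ (x + t) ^ (-t) * Gamma (x + t + 1) := by
  have hconv := Gamma_mul_add_mul_le_rpow_Gamma_mul_rpow_Gamma hxt (by linarith : 0 < x + t + 1)
    ht₀ (sub_pos.2 ht₁) (add_sub_cancel t 1)
  have hG : 0 < Gamma (x + t) := Gamma_pos_of_pos hxt
  rw [show t * (x + t) + (1 - t) * (x + t + 1) = x + 1 by ring, Gamma_add_one hxt.ne',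
    mul_rpow hxt.le hG.le, ← mul_assoc, mul_comm (Gamma (x + t) ^ t), mul_assoc,
    ← rpow_add hG, add_sub_cancel, rpow_one] at hconv
  calc Gamma (x + 1) ≤ (x + t) ^ (1 - t) * Gamma (x + t) := hconv
    _ = (x + t) ^ (-t) * Gamma (x + t + 1) := by
      rw [Gamma_add_one hxt.ne', sub_eq_add_neg, rpow_add hxt, rpow_one]; ring

end Real

lemma a_nonneg {p : ℝ} (hp : 1/2 ≤ p) (k : ℕ) : 0 ≤ a p k := by
  unfold a
  have := Real.Gamma_nonneg_of_nonneg (by linarith : (0:ℝ) ≤ 2 * p)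
  have := Real.Gamma_nonneg_of_nonneg (Nat.cast_nonneg k)
  have := Real.Gamma_nonneg_of_nonneg (by linarith [(Nat.cast_nonneg k : (0:ℝ) ≤ k)] :
    (0:ℝ) ≤ k + 2 * p - 1)
  positivity

lemma a_succ_le_rpow {p : ℝ} (hp : 1/2 < p) (hp' : p < 1) {n : ℕ} (hn : 0 < n) :
    a p (n + 1) ≤ Real.Gamma (2 * p) * (n : ℝ) ^ (1 - 2 * p) := by
  have hn' : (0:ℝ) < n := Nat.cast_pos.2 hn
  have hG := Real.Gamma_add_one_le_rpow_mul_Gamma (x := n) (t := 2 * p - 1)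
    (by linarith) (by linarith) (by linarith)
  have hGpos : 0 < Real.Gamma ((n:ℝ) + (2 * p - 1) + 1) := Real.Gamma_pos_of_pos (by linarith)
  have hmono : ((n:ℝ) + (2 * p - 1)) ^ (-(2 * p - 1)) ≤ (n : ℝ) ^ (1 - 2 * p) := by
    rw [neg_sub]; exact Real.rpow_le_rpow_of_nonpos hn' (by linarith) (by linarith)
  unfold a
  rw [show ((n + 1 : ℕ) : ℝ) + 2 * p - 1 = n + (2 * p - 1) + 1 by push_cast; ring,
    Nat.cast_succ, div_le_iff₀ hGpos, mul_assoc]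
  exact mul_le_mul_of_nonneg_left (hG.trans (mul_le_mul_of_nonneg_right hmono hGpos.le))
    (Real.Gamma_nonneg_of_nonneg (by linarith))

lemma a_le_rpow_of_lt {p : ℝ} (hp : 1/2 < p) (hp' : p < 1) {n k : ℕ} (hn : 0 < n) (hnk : n < k) :
    a p k ≤ Real.Gamma (2 * p) * (n : ℝ) ^ (1 - 2 * p) := by
  obtain ⟨j, rfl⟩ := Nat.exists_eq_add_of_lt hnk
  calc a p (n + j + 1) ≤ Real.Gamma (2 * p) * ((n + j : ℕ) : ℝ) ^ (1 - 2 * p) :=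
        a_succ_le_rpow hp hp' (by omega)
    _ ≤ Real.Gamma (2 * p) * (n : ℝ) ^ (1 - 2 * p) := by
        refine mul_le_mul_of_nonneg_left ?_ (Real.Gamma_nonneg_of_nonneg (by linarith))
        exact Real.rpow_le_rpow_of_nonpos (Nat.cast_pos.2 hn) (by norm_cast; omega) (by linarith)

lemma Gamma_mul_rpow_eq_mul_s {p : ℝ} (hp : 3/4 < p) {n : ℕ} (hn : 0 < n) :
    Real.Gamma (2 * p) * (n : ℝ) ^ (1 - 2 * p)
      = Real.sqrt (4 * p - 3) * (n : ℝ) ^ (-(1/2 : ℝ)) * s p n := by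
  have hn' : (0:ℝ) < n := Nat.cast_pos.2 hn
  have hsq : Real.sqrt (4 * p - 3) ≠ 0 := (Real.sqrt_pos.2 (by linarith)).ne'
  unfold s
  rw [show (1:ℝ) - 2 * p = -(1/2) + (3/2 - 2 * p) by ring, Real.rpow_add hn']
  linear_combination -((n : ℝ) ^ (-(1/2 : ℝ)) * (n : ℝ) ^ ((3:ℝ)/2 - 2 * p)) *
    mul_div_cancel₀ (Real.Gamma (2 * p)) hsq

lemma eventually_two_mul_Gamma_rpow_le {p : ℝ} (hp : 3/4 < p) {ε : ℝ} (hε : 0 < ε) :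
    ∀ᶠ n : ℕ in Filter.atTop, 2 * (Real.Gamma (2 * p) * (n : ℝ) ^ (1 - 2 * p)) ≤ ε * s p n := by
  have hlim : Filter.Tendsto (fun n : ℕ => 2 * Real.sqrt (4 * p - 3) * (n : ℝ) ^ (-(1/2 : ℝ)))
      Filter.atTop (nhds 0) := by
    simpa using ((tendsto_rpow_neg_atTop (by norm_num : (0:ℝ) < 1/2)).comp
      tendsto_natCast_atTop_atTop).const_mul (2 * Real.sqrt (4 * p - 3))
  filter_upwards [hlim.eventually_le_const hε, Filter.eventually_gt_atTop 0] with n hlt hn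
  have hs : 0 < s p n := by
    unfold s
    have := Real.Gamma_pos_of_pos (by linarith : (0:ℝ) < 2 * p)
    have := Real.sqrt_pos.2 (by linarith : (0:ℝ) < 4 * p - 3)
    have : (0:ℝ) < n := Nat.cast_pos.2 hn
    positivity
  rw [Gamma_mul_rpow_eq_mul_s hp hn, ← mul_assoc, ← mul_assoc]
  exact mul_le_mul_of_nonneg_right hlt hs.le

section ConditionalExpectation

variable {Ω : Type*} {m m0 : MeasurableSpace Ω} {μ : Measure Ω}

lemma abs_sub_condExp_le_two {f : Ω → ℝ} (hf : ∀ᵐ ω ∂μ, |f ω| ≤ 1) :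
    ∀ᵐ ω ∂μ, |f ω - (μ[f | m]) ω| ≤ 2 := by
  filter_upwards [hf, ae_bdd_abs_condExp_of_ae_bdd_abs (m := m) hf] with ω h₁ h₂
  linarith [abs_sub (f ω) ((μ[f | m]) ω)]

lemma condExp_sq_mul_ite_lt_abs_ae_eq_zero {f : Ω → ℝ} {δ : ℝ} (hf : ∀ᵐ ω ∂μ, |f ω| ≤ δ) :
    μ[fun ω => f ω ^ 2 * (if δ < |f ω| then (1:ℝ) else 0) | m] =ᵐ[μ] 0 := by
  refine (condExp_congr_ae (hf.mono fun ω hω => ?_)).trans condExp_zero.eventuallyEq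
  simp [not_lt.2 hω]

end ConditionalExpectation

lemma abs_dM_le {Ω : Type*} {m0 : MeasurableSpace Ω} {μ : Measure Ω} {ℱ : Filtration ℕ m0}
    {X : ℕ → Ω → ℝ} {p : ℝ} (hp : 1/2 ≤ p) {k : ℕ} (hX : ∀ᵐ ω ∂μ, X k ω = 1 ∨ X k ω = -1) :
    ∀ᵐ ω ∂μ, |dM μ ℱ p X k ω| ≤ 2 * a p k := by
  have hX' : ∀ᵐ ω ∂μ, |X k ω| ≤ 1 := hX.mono fun ω h => by rcases h with h | h <;> simp [h]
  filter_upwards [abs_sub_condExp_le_two (m := ℱ (k - 1)) hX'] with ω hω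
  rw [dM, abs_mul, abs_of_nonneg (a_nonneg hp k), mul_comm]
  exact mul_le_mul_of_nonneg_right hω (a_nonneg hp k)

theorem stmt_16_general {Ω : Type*} {m0 : MeasurableSpace Ω} (μ : Measure Ω)
    (ℱ : Filtration ℕ m0)
    (X : ℕ → Ω → ℝ)
    (hXpm : ∀ n : ℕ, 1 ≤ n → ∀ᵐ ω ∂μ, X n ω = 1 ∨ X n ω = -1)
    (p : ℝ) (hp : 3/4 < p) (hp' : p < 1) :
    ∀ ε : ℝ, 0 < ε → ∀ t : ℝ, 0 ≤ t →
      ∀ᵐ ω ∂μ, Filter.Tendsto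
        (fun n : ℕ => (1 / (s p n)^2) *
          ∑ k ∈ Finset.Icc (n+1) (n + ⌊(n:ℝ) * t⌋₊),
            (μ[fun ω' => (dM μ ℱ p X k ω')^2 *
                (if ε * s p n < |dM μ ℱ p X k ω'| then (1:ℝ) else 0) | ℱ (k-1)]) ω)
        Filter.atTop (nhds 0) := by
  intro ε hε t _
  obtain ⟨N, hN⟩ := Filter.eventually_atTop.1
    ((eventually_two_mul_Gamma_rpow_le hp hε).and (Filter.eventually_gt_atTop 0))
  have hzero : ∀ n k : ℕ, ∀ᵐ ω ∂μ, N ≤ n → n < k →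
      (μ[fun ω' => (dM μ ℱ p X k ω')^2 *
          (if ε * s p n < |dM μ ℱ p X k ω'| then (1:ℝ) else 0) | ℱ (k-1)]) ω = 0 := by
    intro n k
    by_cases hnk : N ≤ n ∧ n < k
    · obtain ⟨hbound, hn⟩ := hN n hnk.1
      have hdM : ∀ᵐ ω ∂μ, |dM μ ℱ p X k ω| ≤ ε * s p n :=
        (abs_dM_le (by linarith) (hXpm k (by omega))).mono fun ω hω => hω.trans <|
          (by linarith [a_le_rpow_of_lt (by linarith) hp' hn hnk.2])
      filter_upwards [condExp_sq_mul_ite_lt_abs_ae_eq_zero hdM] with ω hω _ _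
      exact hω
    · exact .of_forall fun _ h₁ h₂ => (hnk ⟨h₁, h₂⟩).elim
  filter_upwards [ae_all_iff.2 fun n => ae_all_iff.2 (hzero n)] with ω hω
  refine tendsto_const_nhds.congr' ?_
  filter_upwards [Filter.eventually_ge_atTop N] with n hn
  rw [Finset.sum_eq_zero fun k hk => hω n k hn (Finset.mem_Icc.1 hk).1, mul_zero]

theorem stmt_16 {Ω : Type*} {m0 : MeasurableSpace Ω} (μ : Measure Ω)
    [IsProbabilityMeasure μ] (ℱ : Filtration ℕ m0)
    (X : ℕ → Ω → ℝ) (hadapted : Adapted ℱ X)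
    (hXpm : ∀ n : ℕ, 1 ≤ n → ∀ᵐ ω ∂μ, X n ω = 1 ∨ X n ω = -1)
    (p : ℝ) (hp : 3/4 < p) (hp' : p < 1)
    (hcond : ∀ n : ℕ, 1 ≤ n →
      μ[X (n+1) | ℱ n] =ᵐ[μ] fun ω => (2*p - 1) * erwS X n ω / n) :
    ∀ ε : ℝ, 0 < ε → ∀ t : ℝ, 0 ≤ t →
      ∀ᵐ ω ∂μ, Filter.Tendsto
        (fun n : ℕ => (1 / (s p n)^2) *
          ∑ k ∈ Finset.Icc (n+1) (n + ⌊(n:ℝ) * t⌋₊),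
            (μ[fun ω' => (dM μ ℱ p X k ω')^2 *
                (if ε * s p n < |dM μ ℱ p X k ω'| then (1:ℝ) else 0) | ℱ (k-1)]) ω)
        Filter.atTop (nhds 0) :=
  stmt_16_general μ ℱ X hXpm p hp hp'
end

section
/- Let f : [0,∞) → ℝ be continuous and let (f_n)_{n≥2} be functions from [0,∞) to ℝ that converge to f uniformly on every compact interval [0,T]. For integers n ≥ 2 define τ_n(t) = log(n + ⌊n^t⌋)/log n. Then for every T ≥ 0, sup_{t∈[0,T]} |f_n(τ_n(t)) − f(max(1,t))| → 0 as n → ∞. -/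
/-- `τ_n(t) = log(n + ⌊n^t⌋)/log n`. -/
noncomputable def tau (n : ℕ) (t : ℝ) : ℝ :=
  Real.log ((n : ℝ) + (⌊(n:ℝ) ^ t⌋₊ : ℝ)) / Real.log n

lemma tau_bounds (n : ℕ) (hn : 2 ≤ n) (t : ℝ) (ht : 0 ≤ t) :
    max 1 t ≤ tau n t ∧ tau n t ≤ max 1 t + Real.log 2 / Real.log n := by
  have hn1 : (1:ℝ) < (n:ℝ) := by exact_mod_cast lt_of_lt_of_le one_lt_two hn
  have hn0 : (0:ℝ) < (n:ℝ) := lt_trans one_pos hn1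
  have hlogn : 0 < Real.log n := Real.log_pos hn1
  set x := (n:ℝ) ^ t with hxdef
  have hx0 : 0 < x := Real.rpow_pos_of_pos hn0 t
  have hfl_le : (⌊x⌋₊ : ℝ) ≤ x := Nat.floor_le hx0.le
  have hfl_gt : x - 1 < (⌊x⌋₊ : ℝ) := Nat.sub_one_lt_floor x
  have hfl_nonneg : (0:ℝ) ≤ (⌊x⌋₊ : ℝ) := Nat.cast_nonneg _
  have hpos : 0 < (n:ℝ) + (⌊x⌋₊ : ℝ) := by linarith
  rcases le_total t 1 with h1 | h1
  · have hmax : max 1 t = 1 := max_eq_left h1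
    have hxle : x ≤ n := by
      calc x ≤ (n:ℝ) ^ (1:ℝ) := Real.rpow_le_rpow_of_exponent_le hn1.le h1
      _ = n := Real.rpow_one n
    have hlow : Real.log n ≤ Real.log ((n:ℝ) + ⌊x⌋₊) :=
      Real.log_le_log hn0 (by linarith)
    have hup : Real.log ((n:ℝ) + ⌊x⌋₊) ≤ Real.log 2 + Real.log n := by
      have : Real.log ((n:ℝ) + ⌊x⌋₊) ≤ Real.log (2 * n) :=
        Real.log_le_log hpos (by linarith)
      rwa [Real.log_mul (by norm_num) (ne_of_gt hn0)] at this
    constructor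
    · rw [hmax, tau, le_div_iff₀ hlogn]; linarith
    · rw [hmax, tau, div_le_iff₀ hlogn]
      have : (1 + Real.log 2 / Real.log n) * Real.log n = Real.log n + Real.log 2 := by
        field_simp
      rw [this]; linarith
  · have hmax : max 1 t = t := max_eq_right h1
    have hnx : (n:ℝ) ≤ x := by
      calc (n:ℝ) = (n:ℝ) ^ (1:ℝ) := (Real.rpow_one n).symm
      _ ≤ x := Real.rpow_le_rpow_of_exponent_le hn1.le h1
    have hlogx : Real.log x = t * Real.log n := Real.log_rpow hn0 t
    have hlow : Real.log x ≤ Real.log ((n:ℝ) + ⌊x⌋₊) :=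
      Real.log_le_log hx0 (by nlinarith)
    have hup : Real.log ((n:ℝ) + ⌊x⌋₊) ≤ Real.log 2 + Real.log x := by
      have : Real.log ((n:ℝ) + ⌊x⌋₊) ≤ Real.log (2 * x) :=
        Real.log_le_log hpos (by linarith)
      rwa [Real.log_mul (by norm_num) (ne_of_gt hx0)] at this
    constructor
    · rw [hmax, tau, le_div_iff₀ hlogn]; nlinarith
    · rw [hmax, tau, div_le_iff₀ hlogn]
      have : (t + Real.log 2 / Real.log n) * Real.log n
          = t * Real.log n + Real.log 2 := by field_simp
      rw [this]; nlinarith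

theorem stmt_17 (f : ℝ → ℝ) (hf : ContinuousOn f (Set.Ici 0))
    (F : ℕ → ℝ → ℝ)
    (hconv : ∀ T : ℝ, 0 ≤ T → TendstoUniformlyOn F f Filter.atTop (Set.Icc 0 T)) :
    ∀ T : ℝ, 0 ≤ T →
      Filter.Tendsto
        (fun n : ℕ => ⨆ t : Set.Icc (0:ℝ) T, |F n (tau n t.1) - f (max 1 t.1)|)
        Filter.atTop (nhds 0) := by
  intro T hT
  have hne : Nonempty (Set.Icc (0:ℝ) T) := ⟨⟨0, by simp [hT]⟩⟩
  set T' : ℝ := max 1 T + 1 with hT'def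
  have hT'0 : (0:ℝ) ≤ T' := by positivity
  -- uniform continuity of f on [0, T']
  have hucf : UniformContinuousOn f (Set.Icc 0 T') :=
    isCompact_Icc.uniformContinuousOn_of_continuous
      (hf.mono (fun x hx => hx.1))
  rw [NormedAddCommGroup.tendsto_nhds_zero]
  intro ε hε
  obtain ⟨δ, hδ0, hδ⟩ := (Metric.uniformContinuousOn_iff.mp hucf) (ε/3) (by linarith)
  -- eventual facts
  have E1 : ∀ᶠ n in Filter.atTop, ∀ x ∈ Set.Icc (0:ℝ) T', dist (f x) (F n x) < ε/3 :=
    Metric.tendstoUniformlyOn_iff.mp (hconv T' hT'0) (ε/3) (by linarith)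
  have hlogtop : Filter.Tendsto (fun n : ℕ => Real.log n) Filter.atTop Filter.atTop :=
    Real.tendsto_log_atTop.comp tendsto_natCast_atTop_atTop
  have E2 : ∀ᶠ n : ℕ in Filter.atTop, Real.log 2 / Real.log n < min δ 1 :=
    (Filter.Tendsto.div_atTop tendsto_const_nhds hlogtop).eventually_lt_const
      (lt_min hδ0 one_pos)
  have E3 : ∀ᶠ n in Filter.atTop, 2 ≤ n := Filter.eventually_ge_atTop 2
  filter_upwards [E1, E2, E3] with n h1 h2 h3
  -- pointwise bound
  have key : ∀ t : Set.Icc (0:ℝ) T, |F n (tau n t.1) - f (max 1 t.1)| ≤ 2*ε/3 := by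
    rintro ⟨t, ht0, htT⟩
    obtain ⟨hlb, hub⟩ := tau_bounds n h3 t ht0
    set m := max 1 t with hm
    have hm1 : 1 ≤ m := le_max_left _ _
    have hmT : m ≤ max 1 T := max_le_max le_rfl htT
    have htau_mem : tau n t ∈ Set.Icc (0:ℝ) T' := by
      constructor
      · linarith
      · have : Real.log 2 / Real.log n < 1 := lt_of_lt_of_le h2 (min_le_right _ _)
        simp only [hT'def]; linarith
    have hm_mem : m ∈ Set.Icc (0:ℝ) T' := by
      constructor
      · linarith
      · simp only [hT'def]; linarith
    have hdist : dist (tau n t) m < δ := by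
      rw [Real.dist_eq, abs_of_nonneg (by linarith)]
      have : Real.log 2 / Real.log n < δ := lt_of_lt_of_le h2 (min_le_left _ _)
      linarith
    have hcont : dist (f (tau n t)) (f m) < ε/3 := hδ _ htau_mem _ hm_mem hdist
    have hFf : dist (f (tau n t)) (F n (tau n t)) < ε/3 := h1 _ htau_mem
    have := abs_sub_abs_le_abs_sub (F n (tau n t)) (f m)
    rw [Real.dist_eq] at hcont hFf
    calc |F n (tau n t) - f m|
        ≤ |F n (tau n t) - f (tau n t)| + |f (tau n t) - f m| := abs_sub_le _ _ _
      _ ≤ ε/3 + ε/3 := by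
          rw [abs_sub_comm (F n (tau n t)) (f (tau n t))]
          exact add_le_add hFf.le hcont.le
      _ ≤ 2*ε/3 := by linarith
  have hbdd : BddAbove (Set.range fun t : Set.Icc (0:ℝ) T =>
      |F n (tau n t.1) - f (max 1 t.1)|) := by
    refine ⟨2*ε/3, ?_⟩
    rintro y ⟨t, rfl⟩
    exact key t
  have hsup_le : (⨆ t : Set.Icc (0:ℝ) T, |F n (tau n t.1) - f (max 1 t.1)|) ≤ 2*ε/3 :=
    ciSup_le key
  have hsup_nonneg : 0 ≤ ⨆ t : Set.Icc (0:ℝ) T, |F n (tau n t.1) - f (max 1 t.1)| := by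
    refine le_trans (abs_nonneg _) (le_ciSup hbdd ⟨0, by simp [hT]⟩)
  rw [Real.norm_eq_abs, abs_of_nonneg hsup_nonneg]
  linarith
end
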